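/- In the max-relaxation iteration for an irreducible finite matrix set 𝒜, let ρ⁺ = lim ρ⁺_n and ρ⁻ = lim ρ⁻_n (these limits exist by monotonicity), set γ = γ(ρ⁻, ρ⁺), and suppose a subsequence of normalized norms ‖·‖°_{n_k} converges uniformly on bounded subsets of ℝ^m to a norm N_0. Define recursively N_{j+1}(x) = max{N_j(x), γ^{-1} max_{1≤i≤r} N_j(A_i x)}. Then for every j ≥ 0: (a) the norms x ↦ ‖x‖_{n_k + j}/‖e‖_{n_k} converge, as k → ∞, uniformly on bounded subsets of ℝ^m to N_j; and (b) max_{x≠0} (max_i N_j(A_i x))/N_j(x) = ρ⁺ and min_{x≠0} (max_i N_j(A_i x))/N_j(x) = ρ⁻. -/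

import Mathlib

open Matrix Filter Topology Bornology Pointwise

/-- `N` is a norm on `ℝ^m`: nonnegative, definite, absolutely homogeneous, subadditive. -/
def IsNorm {m : ℕ} (N : (Fin m → ℝ) → ℝ) : Prop :=
  (∀ x, 0 ≤ N x) ∧ (∀ x, N x = 0 → x = 0) ∧
    (∀ (t : ℝ) (x), N (t • x) = |t| * N x) ∧ (∀ x y, N (x + y) ≤ N x + N y)

/-- `N` is a seminorm on `ℝ^m`. -/
def IsSeminorm {m : ℕ} (N : (Fin m → ℝ) → ℝ) : Prop :=
  (∀ x, 0 ≤ N x) ∧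
    (∀ (t : ℝ) (x), N (t • x) = |t| * N x) ∧ (∀ x y, N (x + y) ≤ N x + N y)

/-- The family `A` is irreducible: the matrices have no common invariant subspace
other than `⊥` and `⊤`. -/
def IsIrreducibleFamily {m r : ℕ} (A : Fin r → Matrix (Fin m) (Fin m) ℝ) : Prop :=
  ∀ W : Submodule ℝ (Fin m → ℝ), (∀ i, ∀ x ∈ W, (A i).mulVec x ∈ W) → W = ⊥ ∨ W = ⊤

/-- The operator norm of a matrix acting on `ℝ^m` (with its sup norm). -/
noncomputable def matNorm {m : ℕ} (M : Matrix (Fin m) (Fin m) ℝ) : ℝ :=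
  ‖LinearMap.toContinuousLinearMap M.mulVecLin‖

/-- The joint spectral radius of the family `A`:
`limsup_n (max over words of length n of the norm of the product)^(1/n)`. -/
noncomputable def jsr {m r : ℕ} (A : Fin r → Matrix (Fin m) (Fin m) ℝ) : ℝ :=
  Filter.atTop.limsup fun n : ℕ =>
    (⨆ w : Fin n → Fin r, matNorm (List.ofFn fun k => A (w k)).prod) ^ (1 / (n : ℝ))

/-- `maxA A N x = max_i N (A_i x)`. -/
noncomputable def maxA {m r : ℕ} (A : Fin r → Matrix (Fin m) (Fin m) ℝ)
    (N : (Fin m → ℝ) → ℝ) (x : Fin m → ℝ) : ℝ :=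
  ⨆ i, N ((A i).mulVec x)

/-- `ρ⁺ = max_{x ≠ 0} (max_i N (A_i x)) / N x`. -/
noncomputable def rhoSup {m r : ℕ} (A : Fin r → Matrix (Fin m) (Fin m) ℝ)
    (N : (Fin m → ℝ) → ℝ) : ℝ :=
  sSup ((fun x => maxA A N x / N x) '' {x | x ≠ 0})

/-- `ρ⁻ = min_{x ≠ 0} (max_i N (A_i x)) / N x`. -/
noncomputable def rhoInf {m r : ℕ} (A : Fin r → Matrix (Fin m) (Fin m) ℝ)
    (N : (Fin m → ℝ) → ℝ) : ℝ :=
  sInf ((fun x => maxA A N x / N x) '' {x | x ≠ 0})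

/-- An averaging function: continuous on positives, `γ t t = t`, and strictly
between `min` and `max` off the diagonal. -/
def IsAveraging (γ : ℝ → ℝ → ℝ) : Prop :=
  ContinuousOn (fun p : ℝ × ℝ => γ p.1 p.2) {p | 0 < p.1 ∧ 0 < p.2} ∧
    (∀ t, 0 < t → γ t t = t) ∧
    ∀ t s, 0 < t → 0 < s → t ≠ s → min t s < γ t s ∧ γ t s < max t s

/-- The max-relaxation iteration: `‖x‖_{n+1} = max (‖x‖_n, γ_n⁻¹ max_i ‖A_i x‖_n)`
where `γ_n = γ (ρ⁻_n, ρ⁺_n)`. -/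
noncomputable def iterN {m r : ℕ} (A : Fin r → Matrix (Fin m) (Fin m) ℝ)
    (γ : ℝ → ℝ → ℝ) (N0 : (Fin m → ℝ) → ℝ) : ℕ → (Fin m → ℝ) → ℝ
  | 0 => N0
  | n + 1 => fun x =>
      max (iterN A γ N0 n x)
        ((γ (rhoInf A (iterN A γ N0 n)) (rhoSup A (iterN A γ N0 n)))⁻¹ *
          maxA A (iterN A γ N0 n) x)

/-- The normalized norms `‖x‖°_n = ‖x‖_n / ‖e‖_n` of the max-relaxation iteration
(for `n = 0` this equals `‖x‖_0` since `‖e‖_0 = 1`). -/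
noncomputable def iterNnorm {m r : ℕ} (A : Fin r → Matrix (Fin m) (Fin m) ℝ)
    (γ : ℝ → ℝ → ℝ) (N0 : (Fin m → ℝ) → ℝ) (e : Fin m → ℝ) (n : ℕ) :
    (Fin m → ℝ) → ℝ :=
  fun x => iterN A γ N0 n x / iterN A γ N0 n e

/-- `e⁺(N, N') = max_{x ≠ 0} N x / N' x`. -/
noncomputable def ePlus {m : ℕ} (N N' : (Fin m → ℝ) → ℝ) : ℝ :=
  sSup ((fun x => N x / N' x) '' {x | x ≠ 0})

/-- `e⁻(N, N') = min_{x ≠ 0} N x / N' x`. -/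
noncomputable def eMinus {m : ℕ} (N N' : (Fin m → ℝ) → ℝ) : ℝ :=
  sInf ((fun x => N x / N' x) '' {x | x ≠ 0})

/-- The eccentricity of the norm `N` with respect to the norm `N'`. -/
noncomputable def ecc {m : ℕ} (N N' : (Fin m → ℝ) → ℝ) : ℝ :=
  ePlus N N' / eMinus N N'

/-!
If norms `f k` converge to a norm `N` uniformly on bounded sets, then for every `c > 1`
eventually `f k ≤ c • N` and `N ≤ c • f k` everywhere: compare on the unit sphere, where `N` is
bounded below, and extend by homogeneity. Such a two-sided bound changes every ratio
`max_i f (A_i x) / f x` by at most the factor `c ^ 2`, so `ρ⁺` and `ρ⁻` are continuous along the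
convergence.

The limit `N_0` is a seminorm with `N_0 e = 1` and `N_0 (A_i x) ≤ ρ⁺ N_0 x`, so its null space is a
proper common invariant subspace, hence zero by irreducibility. Then `ρ⁻ = ρ⁻(N_0) > 0`, the
factors `γ_n` converge to `γ > 0`, and one relaxation step commutes with the limit because `max`,
`max_i` and multiplication by convergent scalars preserve uniform convergence on bounded sets.
This gives (a) by induction on `j`, and (b) by the continuity of `ρ^±`.
-/

section Seminorm

variable {m : ℕ} {N : (Fin m → ℝ) → ℝ}

lemma IsNorm.isSeminorm (hN : IsNorm N) : IsSeminorm N :=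
  ⟨hN.1, hN.2.2⟩

lemma IsNorm.pos (hN : IsNorm N) {x : Fin m → ℝ} (hx : x ≠ 0) : 0 < N x :=
  (hN.1 x).lt_of_ne fun h => hx (hN.2.1 x h.symm)

lemma IsSeminorm.map_zero (hN : IsSeminorm N) : N 0 = 0 := by
  simpa using hN.2.1 0 0

lemma IsSeminorm.abs_sub_le (hN : IsSeminorm N) (x y : Fin m → ℝ) :
    |N x - N y| ≤ N (x - y) := by
  have hxy := hN.2.2 (x - y) y
  have hyx := hN.2.2 (y - x) x
  have hneg : N (y - x) = N (x - y) := by simpa using hN.2.1 (-1) (x - y)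
  simp only [sub_add_cancel] at hxy hyx
  exact abs_sub_le_iff.2 ⟨by linarith, by linarith⟩

lemma IsSeminorm.exists_le_mul_norm (hN : IsSeminorm N) : ∃ b : ℝ, ∀ x, N x ≤ b * ‖x‖ := by
  classical
  refine ⟨∑ i, N (Pi.single i 1), fun x => ?_⟩
  calc N x = N (∑ i, x i • Pi.single i 1) := by rw [← pi_eq_sum_univ' x]
    _ ≤ ∑ i, N (x i • Pi.single i 1) :=
        Finset.le_sum_of_subadditive N hN.map_zero.le hN.2.2 _ _
    _ = ∑ i, |x i| * N (Pi.single i 1) := by simp only [hN.2.1]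
    _ ≤ ∑ i, ‖x‖ * N (Pi.single i 1) := by
        gcongr with i
        · exact hN.1 _
        · exact norm_le_pi_norm x i
    _ = (∑ i, N (Pi.single i 1)) * ‖x‖ := by rw [Finset.sum_mul]; simp only [mul_comm]

lemma IsSeminorm.exists_lipschitzWith (hN : IsSeminorm N) : ∃ K, LipschitzWith K N := by
  obtain ⟨b, hb⟩ := hN.exists_le_mul_norm
  refine ⟨_, LipschitzWith.of_dist_le' (K := b) fun x y => ?_⟩
  rw [Real.dist_eq, dist_eq_norm]
  exact (hN.abs_sub_le x y).trans (hb _)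

lemma IsSeminorm.continuous (hN : IsSeminorm N) : Continuous N :=
  let ⟨_, hK⟩ := hN.exists_lipschitzWith
  hK.continuous

end Seminorm

section Sphere

variable {E : Type*} [NormedAddCommGroup E] [NormedSpace ℝ E]

lemma le_of_forall_mem_sphere {f g : E → ℝ} (hf : ∀ (t : ℝ) x, f (t • x) = |t| * f x)
    (hg : ∀ (t : ℝ) x, g (t • x) = |t| * g x) (h : ∀ u ∈ Metric.sphere (0 : E) 1, f u ≤ g u)
    (x : E) : f x ≤ g x := by
  rcases eq_or_ne x 0 with rfl | hx
  · have hf0 := hf 0 0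
    have hg0 := hg 0 0
    simp only [zero_smul, abs_zero, zero_mul] at hf0 hg0
    rw [hf0, hg0]
  · have hu := h (‖x‖⁻¹ • x) (by simp [norm_smul, hx])
    rwa [hf, hg, mul_le_mul_iff_of_pos_left (by positivity)] at hu

lemma image_compl_zero_eq_image_sphere {α : Type*} {g : E → α}
    (hg : ∀ t : ℝ, t ≠ 0 → ∀ x, g (t • x) = g x) :
    g '' {x | x ≠ 0} = g '' Metric.sphere 0 1 := by
  refine (Set.image_mono fun x hx => ne_zero_of_mem_unit_sphere ⟨x, hx⟩).antisymm' ?_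
  rintro _ ⟨x, hx : x ≠ 0, rfl⟩
  exact ⟨‖x‖⁻¹ • x, by simp [norm_smul, hx], hg _ (by simpa using hx) x⟩

end Sphere

lemma IsNorm.exists_pos_mul_norm_le {m : ℕ} {N : (Fin m → ℝ) → ℝ} (hN : IsNorm N) :
    ∃ a > 0, ∀ x, a * ‖x‖ ≤ N x := by
  rcases isEmpty_or_nonempty (Fin m) with hm | hm
  · exact ⟨1, one_pos, fun x => by simp [Subsingleton.elim x 0, hN.isSeminorm.map_zero]⟩
  obtain ⟨u, hu, hmin⟩ := (isCompact_sphere (0 : Fin m → ℝ) 1).exists_isMinOn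
    (NormedSpace.sphere_nonempty.2 zero_le_one) hN.isSeminorm.continuous.continuousOn
  refine ⟨N u, hN.pos (ne_zero_of_mem_unit_sphere ⟨u, hu⟩), le_of_forall_mem_sphere
    (fun t x => by rw [norm_smul, Real.norm_eq_abs]; ring) hN.2.2.1 fun v hv => ?_⟩
  rw [mem_sphere_zero_iff_norm.1 hv, mul_one]
  exact hmin hv

section MaxA

variable {m r : ℕ} (A : Fin r → Matrix (Fin m) (Fin m) ℝ) {N N' : (Fin m → ℝ) → ℝ}

lemma le_maxA (i : Fin r) (x : Fin m → ℝ) : N (A i *ᵥ x) ≤ maxA A N x :=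
  le_ciSup (f := fun i => N (A i *ᵥ x)) (Set.finite_range _).bddAbove i

lemma maxA_nonneg (hN : ∀ x, 0 ≤ N x) (x : Fin m → ℝ) : 0 ≤ maxA A N x :=
  Real.iSup_nonneg fun _ => hN _

lemma maxA_mono (h : ∀ x, N x ≤ N' x) (x : Fin m → ℝ) : maxA A N x ≤ maxA A N' x :=
  ciSup_mono (Set.finite_range _).bddAbove fun _ => h _

lemma maxA_const_mul {c : ℝ} (hc : 0 ≤ c) (x : Fin m → ℝ) :
    maxA A (fun y => c * N y) x = c * maxA A N x :=
  (Real.mul_iSup_of_nonneg hc _).symm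

lemma maxA_smul (hN : ∀ (t : ℝ) x, N (t • x) = |t| * N x) (t : ℝ) (x : Fin m → ℝ) :
    maxA A N (t • x) = |t| * maxA A N x := by
  simp only [maxA, Matrix.mulVec_smul, hN, Real.mul_iSup_of_nonneg (abs_nonneg t)]

lemma abs_maxA_sub_maxA_le {x : Fin m → ℝ} {δ : ℝ} (hδ : 0 ≤ δ)
    (h : ∀ i, |N (A i *ᵥ x) - N' (A i *ᵥ x)| ≤ δ) : |maxA A N x - maxA A N' x| ≤ δ := by
  rcases isEmpty_or_nonempty (Fin r) with hr | hr
  · simpa [maxA] using hδ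
  refine abs_sub_le_iff.2 ⟨?_, ?_⟩ <;> rw [sub_le_iff_le_add] <;> refine ciSup_le fun i => ?_
  · linarith [(abs_sub_le_iff.1 (h i)).1, le_maxA A (N := N') i x]
  · linarith [(abs_sub_le_iff.1 (h i)).2, le_maxA A (N := N) i x]

lemma IsSeminorm.maxA (hN : IsSeminorm N) : IsSeminorm (maxA A N) := by
  refine ⟨maxA_nonneg A hN.1, maxA_smul A hN.2.1, fun x y => Real.iSup_le (fun i => ?_)
    (add_nonneg (maxA_nonneg A hN.1 x) (maxA_nonneg A hN.1 y))⟩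
  rw [Matrix.mulVec_add]
  exact (hN.2.2 _ _).trans (add_le_add (le_maxA A i x) (le_maxA A i y))

lemma IsNorm.max_mul_maxA (hN : IsNorm N) (c : ℝ) :
    IsNorm (fun x => max (N x) (c * maxA A N x)) := by
  have hM := hN.isSeminorm.maxA A
  rcases lt_or_ge c 0 with hc | hc
  · simpa only [max_eq_left ((mul_nonpos_of_nonpos_of_nonneg hc.le (hM.1 _)).trans (hN.1 _))]
      using hN
  refine ⟨fun x => le_max_of_le_left (hN.1 x),
    fun x hx => hN.2.1 x (le_antisymm (hx ▸ le_max_left _ _) (hN.1 x)), fun t x => ?_,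
    fun x y => ?_⟩
  · simp only [hN.2.2.1, hM.2.1, mul_left_comm c, mul_max_of_nonneg _ _ (abs_nonneg t)]
  · calc max (N (x + y)) (c * maxA A N (x + y))
        ≤ max (N x + N y) (c * maxA A N x + c * maxA A N y) := by
          rw [← mul_add]; gcongr
          exacts [hN.2.2.2 x y, hM.2.2 x y]
      _ ≤ _ := max_le (add_le_add (le_max_left _ _) (le_max_left _ _))
          (add_le_add (le_max_right _ _) (le_max_right _ _))

end MaxA

section Irreducible

variable {m r : ℕ} {A : Fin r → Matrix (Fin m) (Fin m) ℝ}

lemma IsIrreducibleFamily.exists_mulVec_ne_zero (hA : IsIrreducibleFamily A) (hm : 2 ≤ m)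
    {x : Fin m → ℝ} (hx : x ≠ 0) : ∃ i, A i *ᵥ x ≠ 0 := by
  by_contra! h
  have hinv : ∀ i, ∀ y ∈ ℝ ∙ x, A i *ᵥ y ∈ ℝ ∙ x := fun i y hy => by
    obtain ⟨c, rfl⟩ := Submodule.mem_span_singleton.1 hy
    simp [Matrix.mulVec_smul, h i]
  rcases hA _ hinv with hbot | htop
  · exact hx (Submodule.span_singleton_eq_bot.1 hbot)
  · have hrank := congrArg (fun W : Submodule ℝ (Fin m → ℝ) => Module.finrank ℝ W) htop
    rw [finrank_span_singleton hx, finrank_top, Module.finrank_fin_fun] at hrank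
    omega

lemma IsIrreducibleFamily.maxA_pos (hA : IsIrreducibleFamily A) (hm : 2 ≤ m)
    {N : (Fin m → ℝ) → ℝ} (hN : IsNorm N) {x : Fin m → ℝ} (hx : x ≠ 0) : 0 < maxA A N x := by
  obtain ⟨i, hi⟩ := hA.exists_mulVec_ne_zero hm hx
  exact (hN.pos hi).trans_le (le_maxA A i x)

lemma IsIrreducibleFamily.isNorm_of_isSeminorm (hA : IsIrreducibleFamily A)
    {N : (Fin m → ℝ) → ℝ} (hN : IsSeminorm N) {e : Fin m → ℝ} (he : N e ≠ 0) {C : ℝ}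
    (hC : ∀ i x, N (A i *ᵥ x) ≤ C * N x) : IsNorm N := by
  let W : Submodule ℝ (Fin m → ℝ) :=
    { carrier := {x | N x = 0}
      add_mem' := fun {x y} (hx : N x = 0) (hy : N y = 0) =>
        le_antisymm (by simpa [hx, hy] using hN.2.2 x y) (hN.1 _)
      zero_mem' := hN.map_zero
      smul_mem' := fun c x (hx : N x = 0) => by simp [hN.2.1, hx] }
  refine ⟨hN.1, fun x hx => ?_, hN.2.1, hN.2.2⟩
  rcases hA W fun i x (hx : N x = 0) => le_antisymm (by simpa [hx] using hC i x) (hN.1 _)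
    with hW | hW
  · simpa [hW] using (show x ∈ W from hx)
  · exact absurd (show e ∈ W from hW ▸ Submodule.mem_top) he

end Irreducible

section Rho

variable {m r : ℕ} (A : Fin r → Matrix (Fin m) (Fin m) ℝ) {N N' : (Fin m → ℝ) → ℝ}

lemma maxA_div_smul (hN : ∀ (t : ℝ) x, N (t • x) = |t| * N x) {t : ℝ} (ht : t ≠ 0)
    (x : Fin m → ℝ) : maxA A N (t • x) / N (t • x) = maxA A N x / N x := by
  rw [maxA_smul A hN, hN]
  exact mul_div_mul_left _ _ (abs_ne_zero.2 ht)

lemma maxA_div_const {c : ℝ} (hc : 0 ≤ c) (x : Fin m → ℝ) :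
    maxA A (fun y => N y / c) x = maxA A N x / c := by
  simp_rw [div_eq_inv_mul _ c]
  exact maxA_const_mul A (inv_nonneg.2 hc) x

lemma maxA_div_const_div {c : ℝ} (hc : 0 < c) (x : Fin m → ℝ) :
    maxA A (fun y => N y / c) x / (N x / c) = maxA A N x / N x := by
  rw [maxA_div_const A hc.le, div_div_div_cancel_right₀ hc.ne']

lemma rhoSup_div_const {c : ℝ} (hc : 0 < c) : rhoSup A (fun y => N y / c) = rhoSup A N :=
  congrArg sSup (Set.image_congr fun x _ => maxA_div_const_div A hc x)

lemma rhoInf_div_const {c : ℝ} (hc : 0 < c) : rhoInf A (fun y => N y / c) = rhoInf A N :=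
  congrArg sInf (Set.image_congr fun x _ => maxA_div_const_div A hc x)

lemma isCompact_image_maxA_div (hN : IsNorm N) :
    IsCompact ((fun x => maxA A N x / N x) '' {x | x ≠ 0}) := by
  rw [image_compl_zero_eq_image_sphere fun t ht x => maxA_div_smul A hN.2.2.1 ht x]
  exact (isCompact_sphere 0 1).image_of_continuousOn
    ((hN.isSeminorm.maxA A).continuous.continuousOn.div hN.isSeminorm.continuous.continuousOn
      fun x hx => (hN.pos (ne_zero_of_mem_unit_sphere ⟨x, hx⟩)).ne')

lemma maxA_div_le_rhoSup (hN : IsNorm N) {x : Fin m → ℝ} (hx : x ≠ 0) :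
    maxA A N x / N x ≤ rhoSup A N :=
  le_csSup (isCompact_image_maxA_div A hN).bddAbove ⟨x, hx, rfl⟩

lemma rhoInf_le_maxA_div (hN : IsNorm N) {x : Fin m → ℝ} (hx : x ≠ 0) :
    rhoInf A N ≤ maxA A N x / N x :=
  csInf_le (isCompact_image_maxA_div A hN).bddBelow ⟨x, hx, rfl⟩

lemma maxA_le_rhoSup_mul (hN : IsNorm N) (x : Fin m → ℝ) : maxA A N x ≤ rhoSup A N * N x := by
  rcases eq_or_ne x 0 with rfl | hx
  · simpa [hN.isSeminorm.map_zero] using (maxA_smul A hN.2.2.1 0 0).le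
  · exact (div_le_iff₀ (hN.pos hx)).1 (maxA_div_le_rhoSup A hN hx)

variable [NeZero m]

lemma nonempty_image_maxA_div : ((fun x => maxA A N x / N x) '' {x | x ≠ 0}).Nonempty :=
  let ⟨x, hx⟩ := exists_ne (0 : Fin m → ℝ)
  ⟨_, x, hx, rfl⟩

lemma exists_maxA_div_eq_rhoSup (hN : IsNorm N) : ∃ x ≠ 0, maxA A N x / N x = rhoSup A N :=
  (isCompact_image_maxA_div A hN).sSup_mem (nonempty_image_maxA_div A)

lemma exists_maxA_div_eq_rhoInf (hN : IsNorm N) : ∃ x ≠ 0, maxA A N x / N x = rhoInf A N :=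
  (isCompact_image_maxA_div A hN).sInf_mem (nonempty_image_maxA_div A)

lemma rhoInf_le_rhoSup (hN : IsNorm N) : rhoInf A N ≤ rhoSup A N :=
  csInf_le_csSup (nonempty_image_maxA_div A) (isCompact_image_maxA_div A hN).bddBelow
    (isCompact_image_maxA_div A hN).bddAbove

end Rho

lemma IsIrreducibleFamily.rhoInf_pos {m r : ℕ} {A : Fin r → Matrix (Fin m) (Fin m) ℝ}
    (hA : IsIrreducibleFamily A) (hm : 2 ≤ m) {N : (Fin m → ℝ) → ℝ} (hN : IsNorm N) :
    0 < rhoInf A N := by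
  have : NeZero m := ⟨by omega⟩
  obtain ⟨x, hx, hxeq⟩ := exists_maxA_div_eq_rhoInf A hN
  exact hxeq ▸ div_pos (hA.maxA_pos hm hN hx) (hN.pos hx)

section Comparison

variable {m r : ℕ} (A : Fin r → Matrix (Fin m) (Fin m) ℝ) {N N' : (Fin m → ℝ) → ℝ} {c : ℝ}

lemma maxA_div_le_sq_mul (hN : IsNorm N) (hN' : IsNorm N') (hc : 0 ≤ c)
    (h : ∀ y, N y ≤ c * N' y ∧ N' y ≤ c * N y) {x : Fin m → ℝ} (hx : x ≠ 0) :
    maxA A N x / N x ≤ c ^ 2 * (maxA A N' x / N' x) := by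
  rw [div_le_iff₀ (hN.pos hx)]
  have hratio : 0 ≤ c * (maxA A N' x / N' x) :=
    mul_nonneg hc (div_nonneg (maxA_nonneg A hN'.1 x) (hN'.1 x))
  calc maxA A N x ≤ c * maxA A N' x :=
        (maxA_mono A (fun y => (h y).1) x).trans_eq (maxA_const_mul A hc x)
    _ = c * (maxA A N' x / N' x) * N' x := by field_simp [(hN'.pos hx).ne']
    _ ≤ c * (maxA A N' x / N' x) * (c * N x) := mul_le_mul_of_nonneg_left (h x).2 hratio
    _ = c ^ 2 * (maxA A N' x / N' x) * N x := by ring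

variable [NeZero m]

lemma rhoSup_le_sq_mul (hN : IsNorm N) (hN' : IsNorm N') (hc : 0 ≤ c)
    (h : ∀ y, N y ≤ c * N' y ∧ N' y ≤ c * N y) : rhoSup A N ≤ c ^ 2 * rhoSup A N' := by
  obtain ⟨x, hx, hxeq⟩ := exists_maxA_div_eq_rhoSup A hN
  rw [← hxeq]
  exact (maxA_div_le_sq_mul A hN hN' hc h hx).trans
    (mul_le_mul_of_nonneg_left (maxA_div_le_rhoSup A hN' hx) (sq_nonneg c))

lemma rhoInf_le_sq_mul (hN : IsNorm N) (hN' : IsNorm N') (hc : 0 ≤ c)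
    (h : ∀ y, N y ≤ c * N' y ∧ N' y ≤ c * N y) : rhoInf A N ≤ c ^ 2 * rhoInf A N' := by
  obtain ⟨x, hx, hxeq⟩ := exists_maxA_div_eq_rhoInf A hN'
  rw [← hxeq]
  exact (rhoInf_le_maxA_div A hN hx).trans (maxA_div_le_sq_mul A hN hN' hc h hx)

end Comparison

lemma eventually_le_mul_and_le_mul_of_tendstoUniformlyOn {ι : Type*} {l : Filter ι} {m : ℕ}
    {f : ι → (Fin m → ℝ) → ℝ} {N : (Fin m → ℝ) → ℝ}
    (hf : ∀ k (t : ℝ) x, f k (t • x) = |t| * f k x) (hN : IsNorm N)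
    (hconv : TendstoUniformlyOn f N l (Metric.sphere 0 1)) {c : ℝ} (hc : 1 < c) :
    ∀ᶠ k in l, ∀ x, f k x ≤ c * N x ∧ N x ≤ c * f k x := by
  obtain ⟨a, ha, hlow⟩ := hN.exists_pos_mul_norm_le
  have hd : c⁻¹ < 1 := inv_lt_one_of_one_lt₀ hc
  have hcd : c * c⁻¹ = 1 := mul_inv_cancel₀ (by positivity)
  filter_upwards [Metric.tendstoUniformlyOn_iff.1 hconv (a * (1 - c⁻¹))
    (mul_pos ha (sub_pos.2 hd))] with k hk
  have hsphere : ∀ u ∈ Metric.sphere 0 1, f k u ≤ c * N u ∧ N u ≤ c * f k u := by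
    intro u hu
    have hNu : a ≤ N u := by simpa [mem_sphere_zero_iff_norm.1 hu] using hlow u
    have hdist := abs_sub_lt_iff.1 (Real.dist_eq _ _ ▸ hk u hu)
    have hδ : a * (1 - c⁻¹) ≤ N u * (1 - c⁻¹) := mul_le_mul_of_nonneg_right hNu (by linarith)
    constructor <;> nlinarith [mul_nonneg (sub_nonneg.2 hc.le) (sub_nonneg.2 hd.le)]
  exact fun x => ⟨le_of_forall_mem_sphere (hf k) (fun t y => by rw [hN.2.2.1]; ring)
    (fun u hu => (hsphere u hu).1) x, le_of_forall_mem_sphere hN.2.2.1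
    (fun t y => by rw [hf k]; ring) (fun u hu => (hsphere u hu).2) x⟩

lemma tendsto_of_forall_eventually_le_mul {ι : Type*} {l : Filter ι} {u : ι → ℝ} {L : ℝ}
    (h : ∀ c > 1, ∀ᶠ k in l, u k ≤ c * L ∧ L ≤ c * u k) : Tendsto u l (𝓝 L) := by
  have hexists : ∀ {P : ℝ → Prop}, (∀ᶠ c in 𝓝 1, P c) → ∃ c > 1, P c := fun hP =>
    let ⟨c, hPc, hc⟩ := ((hP.filter_mono nhdsWithin_le_nhds).and
      (self_mem_nhdsWithin (s := Set.Ioi 1))).exists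
    ⟨c, hc, hPc⟩
  refine tendsto_order.2 ⟨fun a ha => ?_, fun b hb => ?_⟩
  · obtain ⟨c, hc, hca⟩ := hexists <|
      ((continuous_mul_const a).tendsto' 1 a (one_mul a)).eventually_lt_const ha
    filter_upwards [h c hc] with k hk
    exact lt_of_mul_lt_mul_left (hca.trans_le hk.2) (by linarith)
  · obtain ⟨c, hc, hcb⟩ := hexists <|
      ((continuous_mul_const L).tendsto' 1 L (one_mul L)).eventually_lt_const hb
    filter_upwards [h c hc] with k hk
    exact hk.1.trans_lt hcb

section Continuity

variable {ι : Type*} {l : Filter ι} {m r : ℕ} [NeZero m] (A : Fin r → Matrix (Fin m) (Fin m) ℝ)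
  {f : ι → (Fin m → ℝ) → ℝ} {N : (Fin m → ℝ) → ℝ}

lemma tendsto_rhoSup_of_tendstoUniformlyOn (hf : ∀ k, IsNorm (f k)) (hN : IsNorm N)
    (hconv : TendstoUniformlyOn f N l (Metric.sphere 0 1)) :
    Tendsto (fun k => rhoSup A (f k)) l (𝓝 (rhoSup A N)) := by
  refine tendsto_of_forall_eventually_le_mul fun c hc => ?_
  filter_upwards [eventually_le_mul_and_le_mul_of_tendstoUniformlyOn (fun k => (hf k).2.2.1) hN
    hconv (Real.lt_sqrt_of_sq_lt (by rwa [one_pow]))] with k hk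
  rw [← Real.sq_sqrt (zero_le_one.trans hc.le)]
  exact ⟨rhoSup_le_sq_mul A (hf k) hN (Real.sqrt_nonneg c) hk,
    rhoSup_le_sq_mul A hN (hf k) (Real.sqrt_nonneg c) fun x => (hk x).symm⟩

lemma tendsto_rhoInf_of_tendstoUniformlyOn (hf : ∀ k, IsNorm (f k)) (hN : IsNorm N)
    (hconv : TendstoUniformlyOn f N l (Metric.sphere 0 1)) :
    Tendsto (fun k => rhoInf A (f k)) l (𝓝 (rhoInf A N)) := by
  refine tendsto_of_forall_eventually_le_mul fun c hc => ?_
  filter_upwards [eventually_le_mul_and_le_mul_of_tendstoUniformlyOn (fun k => (hf k).2.2.1) hN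
    hconv (Real.lt_sqrt_of_sq_lt (by rwa [one_pow]))] with k hk
  rw [← Real.sq_sqrt (zero_le_one.trans hc.le)]
  exact ⟨rhoInf_le_sq_mul A (hf k) hN (Real.sqrt_nonneg c) hk,
    rhoInf_le_sq_mul A hN (hf k) (Real.sqrt_nonneg c) fun x => (hk x).symm⟩

lemma rho_eq_of_tendstoUniformlyOn [l.NeBot] (hf : ∀ k, IsNorm (f k)) (hN : IsNorm N)
    (hconv : ∀ S, IsBounded S → TendstoUniformlyOn f N l S) {ρplus ρminus : ℝ}
    (hplus : Tendsto (fun k => rhoSup A (f k)) l (𝓝 ρplus))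
    (hminus : Tendsto (fun k => rhoInf A (f k)) l (𝓝 ρminus)) :
    rhoSup A N = ρplus ∧ rhoInf A N = ρminus :=
  ⟨tendsto_nhds_unique (tendsto_rhoSup_of_tendstoUniformlyOn A hf hN
      (hconv _ Metric.isBounded_sphere)) hplus,
    tendsto_nhds_unique (tendsto_rhoInf_of_tendstoUniformlyOn A hf hN
      (hconv _ Metric.isBounded_sphere)) hminus⟩

end Continuity

section UniformConvergence

variable {ι α : Type*} {l : Filter ι}

theorem TendstoUniformlyOn.max {f g : ι → α → ℝ} {F G : α → ℝ} {S : Set α}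
    (hf : TendstoUniformlyOn f F l S) (hg : TendstoUniformlyOn g G l S) :
    TendstoUniformlyOn (fun k x => max (f k x) (g k x)) (fun x => max (F x) (G x)) l S :=
  fun u hu => (lipschitzWith_max.uniformContinuous.comp_tendstoUniformlyOn
    (hf.prodMk hg) u hu).diag_of_prod

theorem TendstoUniformlyOn.mul_of_tendsto {f : ι → α → ℝ} {F : α → ℝ} {S : Set α}
    {a : ι → ℝ} {L : ℝ} (hf : TendstoUniformlyOn f F l S) (ha : Tendsto a l (𝓝 L))
    (hF : IsBounded (F '' S)) :
    TendstoUniformlyOn (fun k x => a k * f k x) (fun x => L * F x) l S := by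
  obtain ⟨M, hM⟩ := isBounded_iff_forall_norm_le.1 hF
  rw [Metric.tendstoUniformlyOn_iff] at hf ⊢
  intro ε hε
  have hbdd : ∀ᶠ k in l, |a k| < |L| + 1 :=
    (continuous_abs.tendsto L |>.comp ha).eventually_lt_const (lt_add_one _)
  have hsmall : ∀ᶠ k in l, |L - a k| * (|M| + 1) < ε / 2 := by
    have hlim : Tendsto (fun k => |L - a k| * (|M| + 1)) l (𝓝 0) := by
      simpa using (((tendsto_const_nhds (x := L)).sub ha).abs).mul_const (|M| + 1)
    exact hlim.eventually_lt_const (half_pos hε)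
  filter_upwards [hbdd, hsmall, hf (ε / 2 / (|L| + 1)) (by positivity)] with k hak hLa hfk x hx
  have hFx : |F x| ≤ |M| + 1 := by
    linarith [Real.norm_eq_abs (F x) ▸ hM _ ⟨x, hx, rfl⟩, le_abs_self M]
  have hdist := Real.dist_eq (F x) (f k x) ▸ hfk x hx
  rw [Real.dist_eq]
  calc |L * F x - a k * f k x| = |(L - a k) * F x + a k * (F x - f k x)| := by ring_nf
    _ ≤ |L - a k| * |F x| + |a k| * |F x - f k x| := by
        rw [← abs_mul, ← abs_mul]; exact abs_add_le _ _
    _ < ε / 2 + (|L| + 1) * (ε / 2 / (|L| + 1)) := add_lt_add_of_le_of_lt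
        ((mul_le_mul_of_nonneg_left hFx (abs_nonneg _)).trans hLa.le)
        (mul_lt_mul'' hak hdist (abs_nonneg _) (abs_nonneg _))
    _ = ε := by field_simp; ring

end UniformConvergence

section Limits

variable {ι : Type*} {l : Filter ι} {m r : ℕ} (A : Fin r → Matrix (Fin m) (Fin m) ℝ)
  {f : ι → (Fin m → ℝ) → ℝ} {N : (Fin m → ℝ) → ℝ}

lemma tendstoUniformlyOn_maxA {S : Set (Fin m → ℝ)}
    (hf : TendstoUniformlyOn f N l (⋃ i, (A i *ᵥ ·) '' S)) :
    TendstoUniformlyOn (fun k => maxA A (f k)) (maxA A N) l S := by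
  rw [Metric.tendstoUniformlyOn_iff] at hf ⊢
  intro ε hε
  filter_upwards [hf (ε / 2) (half_pos hε)] with k hk x hx
  rw [Real.dist_eq]
  refine (abs_maxA_sub_maxA_le A (half_pos hε).le fun i => ?_).trans_lt (half_lt_self hε)
  exact Real.dist_eq _ _ ▸ (hk _ (Set.mem_iUnion.2 ⟨i, x, hx, rfl⟩)).le

lemma tendstoUniformlyOn_max_mul_maxA {a : ι → ℝ} {L : ℝ} (ha : Tendsto a l (𝓝 L))
    (hN : IsSeminorm N) (hf : ∀ S, IsBounded S → TendstoUniformlyOn f N l S)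
    {S : Set (Fin m → ℝ)} (hS : IsBounded S) :
    TendstoUniformlyOn (fun k x => max (f k x) (a k * maxA A (f k) x))
      (fun x => max (N x) (L * maxA A N x)) l S := by
  have hAS : IsBounded (⋃ i, (A i *ᵥ ·) '' S) := isBounded_iUnion.2 fun i =>
    (A i).mulVecLin.toContinuousLinearMap.lipschitz.isBounded_image hS
  obtain ⟨K, hK⟩ := (hN.maxA A).exists_lipschitzWith
  exact (hf S hS).max ((tendstoUniformlyOn_maxA A (hf _ hAS)).mul_of_tendsto ha
    (hK.isBounded_image hS))

lemma isSeminorm_of_tendsto [l.NeBot] (hf : ∀ k, IsSeminorm (f k))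
    (h : ∀ x, Tendsto (fun k => f k x) l (𝓝 (N x))) : IsSeminorm N :=
  ⟨fun x => ge_of_tendsto (h x) (Eventually.of_forall fun k => (hf k).1 x),
    fun t x => tendsto_nhds_unique (h (t • x))
      (by simpa only [(hf _).2.1] using (h x).const_mul |t|),
    fun x y => le_of_tendsto_of_tendsto' (h (x + y)) ((h x).add (h y)) fun k => (hf k).2.2 x y⟩

lemma isNorm_and_tendstoUniformlyOn_of_max_mul_maxA {g : ℕ → ι → (Fin m → ℝ) → ℝ}
    {Nseq : ℕ → (Fin m → ℝ) → ℝ} {a : ℕ → ι → ℝ} {L : ℝ} (ha : ∀ j, Tendsto (a j) l (𝓝 L))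
    (hg : ∀ j k x, g (j + 1) k x = max (g j k x) (a j k * maxA A (g j k) x))
    (hNseq : ∀ j x, Nseq (j + 1) x = max (Nseq j x) (L * maxA A (Nseq j) x))
    (hN0 : IsNorm (Nseq 0)) (hconv0 : ∀ S, IsBounded S → TendstoUniformlyOn (g 0) (Nseq 0) l S)
    (j : ℕ) : IsNorm (Nseq j) ∧ ∀ S, IsBounded S → TendstoUniformlyOn (g j) (Nseq j) l S := by
  induction j with
  | zero => exact ⟨hN0, hconv0⟩
  | succ j ih =>
    rw [funext (hNseq j)]
    refine ⟨ih.1.max_mul_maxA A L, fun S hS => ?_⟩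
    exact (tendstoUniformlyOn_max_mul_maxA A (ha j) ih.1.isSeminorm ih.2 hS).congr
      (Eventually.of_forall fun k x _ => (hg j k x).symm)

end Limits

lemma IsIrreducibleFamily.isNorm_of_tendsto {ι : Type*} {l : Filter ι} [l.NeBot] {m r : ℕ}
    {A : Fin r → Matrix (Fin m) (Fin m) ℝ} (hA : IsIrreducibleFamily A)
    {f : ι → (Fin m → ℝ) → ℝ} {N : (Fin m → ℝ) → ℝ} (hf : ∀ k, IsNorm (f k))
    (h : ∀ x, Tendsto (fun k => f k x) l (𝓝 (N x))) {ρ : ℝ}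
    (hρ : Tendsto (fun k => rhoSup A (f k)) l (𝓝 ρ)) {e : Fin m → ℝ} (he : N e ≠ 0) :
    IsNorm N :=
  hA.isNorm_of_isSeminorm (isSeminorm_of_tendsto (fun k => (hf k).isSeminorm) h) he
    fun i x => le_of_tendsto_of_tendsto' (h _) (hρ.mul (h x)) fun k =>
      (le_maxA A i x).trans (maxA_le_rhoSup_mul A (hf k) x)

lemma IsNorm.div_const {m : ℕ} {N : (Fin m → ℝ) → ℝ} (hN : IsNorm N) {c : ℝ} (hc : 0 < c) :
    IsNorm (fun x => N x / c) :=
  ⟨fun x => div_nonneg (hN.1 x) hc.le,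
    fun x hx => hN.2.1 x ((div_eq_zero_iff.1 hx).resolve_right hc.ne'),
    fun t x => by simp only [hN.2.2.1, mul_div_assoc],
    fun x y => by rw [← add_div]; exact div_le_div_of_nonneg_right (hN.2.2.2 x y) hc.le⟩

section Iteration

variable {m r : ℕ} (A : Fin r → Matrix (Fin m) (Fin m) ℝ) (γ : ℝ → ℝ → ℝ)
  {Ninit : (Fin m → ℝ) → ℝ}

lemma isNorm_iterN (hN : IsNorm Ninit) : ∀ n, IsNorm (iterN A γ Ninit n)
  | 0 => hN
  | n + 1 => (isNorm_iterN hN n).max_mul_maxA A _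

lemma le_iterN (x : Fin m → ℝ) : ∀ n, Ninit x ≤ iterN A γ Ninit n x
  | 0 => le_rfl
  | n + 1 => (le_iterN x n).trans (le_max_left _ _)

lemma iterN_pos {x : Fin m → ℝ} (hx : 0 < Ninit x) (n : ℕ) : 0 < iterN A γ Ninit n x :=
  hx.trans_le (le_iterN A γ x n)

lemma iterN_succ_div (n : ℕ) {c : ℝ} (hc : 0 < c) (x : Fin m → ℝ) :
    iterN A γ Ninit (n + 1) x / c =
      max (iterN A γ Ninit n x / c) ((γ (rhoInf A (iterN A γ Ninit n))
        (rhoSup A (iterN A γ Ninit n)))⁻¹ * maxA A (fun y => iterN A γ Ninit n y / c) x) := by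
  rw [maxA_div_const A hc.le, ← mul_div_assoc, max_div_div_right hc.le]
  rfl

end Iteration

lemma IsIrreducibleFamily.isNorm_of_tendsto_iterNnorm {m r : ℕ}
    {A : Fin r → Matrix (Fin m) (Fin m) ℝ} (hA : IsIrreducibleFamily A) {γ : ℝ → ℝ → ℝ}
    {Ninit : (Fin m → ℝ) → ℝ} (hN : IsNorm Ninit) {e : Fin m → ℝ} (he : Ninit e = 1) {ρ : ℝ}
    (hρ : Tendsto (fun n => rhoSup A (iterN A γ Ninit n)) atTop (𝓝 ρ)) {φ : ℕ → ℕ}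
    (hφ : Tendsto φ atTop atTop) {N0 : (Fin m → ℝ) → ℝ}
    (hconv : ∀ x, Tendsto (fun k => iterNnorm A γ Ninit e (φ k) x) atTop (𝓝 (N0 x))) :
    IsNorm N0 := by
  have he_pos n : 0 < iterN A γ Ninit n e := iterN_pos A γ (he ▸ one_pos) n
  have hN0e : N0 e = 1 := tendsto_nhds_unique (hconv e) <| by
    simp only [iterNnorm, div_self (he_pos _).ne', tendsto_const_nhds]
  refine hA.isNorm_of_tendsto (fun k => (isNorm_iterN A γ hN _).div_const (he_pos _)) hconv
    (ρ := ρ) ?_ (hN0e ▸ one_ne_zero)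
  simpa only [iterNnorm, rhoSup_div_const A (he_pos _), Function.comp_def] using hρ.comp hφ

section Averaging

variable {γ : ℝ → ℝ → ℝ} {t s : ℝ}

lemma IsAveraging.pos (hγ : IsAveraging γ) (ht : 0 < t) (hs : 0 < s) : 0 < γ t s := by
  rcases eq_or_ne t s with rfl | hne
  · exact (hγ.2.1 t ht).symm ▸ ht
  · exact (lt_min ht hs).trans (hγ.2.2 t s ht hs hne).1

lemma IsAveraging.tendsto {ι : Type*} {l : Filter ι} {u v : ι → ℝ} (hγ : IsAveraging γ)
    (hu : Tendsto u l (𝓝 t)) (hv : Tendsto v l (𝓝 s)) (ht : 0 < t) (hs : 0 < s) :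
    Tendsto (fun k => γ (u k) (v k)) l (𝓝 (γ t s)) :=
  (hγ.1.continuousAt (((isOpen_lt continuous_const continuous_fst).inter
    (isOpen_lt continuous_const continuous_snd)).mem_nhds ⟨ht, hs⟩)).tendsto.comp
      (hu.prodMk_nhds hv)

end Averaging

theorem stmt12_general {m r : ℕ} (hm : 2 ≤ m)
    (A : Fin r → Matrix (Fin m) (Fin m) ℝ) (hA : IsIrreducibleFamily A)
    (γfun : ℝ → ℝ → ℝ) (hγfun : IsAveraging γfun)
    (Ninit : (Fin m → ℝ) → ℝ) (hNinit : IsNorm Ninit)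
    (e : Fin m → ℝ) (he : Ninit e = 1)
    (ρplus ρminus : ℝ)
    (hplus : Tendsto (fun n => rhoSup A (iterN A γfun Ninit n)) atTop (𝓝 ρplus))
    (hminus : Tendsto (fun n => rhoInf A (iterN A γfun Ninit n)) atTop (𝓝 ρminus))
    (γ : ℝ) (hγ : γ = γfun ρminus ρplus)
    (φ : ℕ → ℕ) (hφ : StrictMono φ)
    (N0 : (Fin m → ℝ) → ℝ)
    (hconv : ∀ S : Set (Fin m → ℝ), IsBounded S →
      TendstoUniformlyOn (fun k => iterNnorm A γfun Ninit e (φ k)) N0 atTop S)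
    (Nseq : ℕ → (Fin m → ℝ) → ℝ) (hNseq0 : Nseq 0 = N0)
    (hNrec : ∀ (j : ℕ) (x), Nseq (j + 1) x = max (Nseq j x) (γ⁻¹ * maxA A (Nseq j) x)) :
    ∀ j : ℕ,
      (∀ S : Set (Fin m → ℝ), IsBounded S →
        TendstoUniformlyOn
          (fun k x => iterN A γfun Ninit (φ k + j) x / iterN A γfun Ninit (φ k) e)
          (Nseq j) atTop S) ∧
      rhoSup A (Nseq j) = ρplus ∧ rhoInf A (Nseq j) = ρminus := by
  have : NeZero m := ⟨by omega⟩
  have he_pos n : 0 < iterN A γfun Ninit n e := iterN_pos A γfun (he ▸ one_pos) n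
  set g : ℕ → ℕ → (Fin m → ℝ) → ℝ :=
    fun j k x => iterN A γfun Ninit (φ k + j) x / iterN A γfun Ninit (φ k) e
  have hg j k : IsNorm (g j k) := (isNorm_iterN A γfun hNinit _).div_const (he_pos _)
  have hφj j : Tendsto (fun k => φ k + j) atTop atTop :=
    (tendsto_add_atTop_nat j).comp hφ.tendsto_atTop
  have hρ j : Tendsto (fun k => rhoSup A (g j k)) atTop (𝓝 ρplus) ∧
      Tendsto (fun k => rhoInf A (g j k)) atTop (𝓝 ρminus) := by
    simp only [g, rhoSup_div_const A (he_pos _), rhoInf_div_const A (he_pos _)]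
    exact ⟨hplus.comp (hφj j), hminus.comp (hφj j)⟩
  have hN0 : IsNorm N0 := hA.isNorm_of_tendsto_iterNnorm hNinit he hplus hφ.tendsto_atTop
    fun x => (hconv {x} isBounded_singleton).tendsto_at rfl
  rw [← hNseq0] at hN0 hconv
  obtain ⟨hρ0p, hρ0m⟩ := rho_eq_of_tendstoUniformlyOn A (hg 0) hN0 hconv (hρ 0).1 (hρ 0).2
  have hρm : 0 < ρminus := hρ0m ▸ hA.rhoInf_pos hm hN0
  have hρp : 0 < ρplus := hρ0p ▸ hρm.trans_le (hρ0m ▸ rhoInf_le_rhoSup A hN0)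
  have hγinv j : Tendsto (fun k => (γfun (rhoInf A (iterN A γfun Ninit (φ k + j)))
      (rhoSup A (iterN A γfun Ninit (φ k + j))))⁻¹) atTop (𝓝 γ⁻¹) :=
    hγ ▸ ((hγfun.tendsto hminus hplus hρm hρp).comp (hφj j)).inv₀ (hγfun.pos hρm hρp).ne'
  have hstep := isNorm_and_tendstoUniformlyOn_of_max_mul_maxA A (g := g) hγinv
    (fun j k x => iterN_succ_div A γfun (φ k + j) (he_pos _) x) hNrec hN0 hconv
  exact fun j => ⟨(hstep j).2, rho_eq_of_tendstoUniformlyOn A (hg j) (hstep j).1 (hstep j).2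
    (hρ j).1 (hρ j).2⟩

/-- if `ρ⁺ = lim ρ⁺_n`, `ρ⁻ = lim ρ⁻_n`, `γ = γ(ρ⁻,ρ⁺)`, and a subsequence
of normalized norms converges uniformly on bounded sets to `N_0`, then for the recursion
`N_{j+1} x = max (N_j x) (γ⁻¹ max_i N_j (A_i x))`: (a) `‖·‖_{n_k+j}/‖e‖_{n_k} → N_j`
uniformly on bounded sets, and (b) `rhoSup (N_j) = ρ⁺` and `rhoInf (N_j) = ρ⁻`. -/
theorem stmt12 {m r : ℕ} (hm : 2 ≤ m) (hr : 1 ≤ r)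
    (A : Fin r → Matrix (Fin m) (Fin m) ℝ) (hA : IsIrreducibleFamily A)
    (γfun : ℝ → ℝ → ℝ) (hγfun : IsAveraging γfun)
    (Ninit : (Fin m → ℝ) → ℝ) (hNinit : IsNorm Ninit)
    (e : Fin m → ℝ) (he : Ninit e = 1)
    (ρplus ρminus : ℝ)
    (hplus : Tendsto (fun n => rhoSup A (iterN A γfun Ninit n)) atTop (𝓝 ρplus))
    (hminus : Tendsto (fun n => rhoInf A (iterN A γfun Ninit n)) atTop (𝓝 ρminus))
    (γ : ℝ) (hγ : γ = γfun ρminus ρplus)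
    (φ : ℕ → ℕ) (hφ : StrictMono φ)
    (N0 : (Fin m → ℝ) → ℝ)
    (hconv : ∀ S : Set (Fin m → ℝ), IsBounded S →
      TendstoUniformlyOn (fun k => iterNnorm A γfun Ninit e (φ k)) N0 atTop S)
    (Nseq : ℕ → (Fin m → ℝ) → ℝ) (hNseq0 : Nseq 0 = N0)
    (hNrec : ∀ (j : ℕ) (x), Nseq (j + 1) x = max (Nseq j x) (γ⁻¹ * maxA A (Nseq j) x)) :
    ∀ j : ℕ,
      (∀ S : Set (Fin m → ℝ), IsBounded S →
        TendstoUniformlyOn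
          (fun k x => iterN A γfun Ninit (φ k + j) x / iterN A γfun Ninit (φ k) e)
          (Nseq j) atTop S) ∧
      rhoSup A (Nseq j) = ρplus ∧ rhoInf A (Nseq j) = ρminus :=
  stmt12_general hm A hA γfun hγfun Ninit hNinit e he ρplus ρminus hplus hminus γ hγ φ hφ N0 hconv
    Nseq hNseq0 hNrec
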